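/- arXiv:2305.03288 — 6 statements merged into one kernel-verified Lean document; each statement's English description precedes it below -/
import Mathlib

section
/- If for two softmax gating systems with the same number k of components we have exp(βᵢᵀx + β₀ᵢ)/Σⱼ exp(βⱼᵀx + β₀ⱼ) = exp(β'ᵢᵀx + β'₀ᵢ)/Σⱼ exp(β'ⱼᵀx + β'₀ⱼ) for all x ∈ ℝ^d and all i ∈ [k], then there exist t₁ ∈ ℝ and t₂ ∈ ℝ^d such that β₀ᵢ = β'₀ᵢ + t₁ and βᵢ = β'ᵢ + t₂ for all i ∈ [k]. -/
open Real Finset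

/-- If two softmax gating systems with the same number of components give the same
gating weights for all inputs, then their parameters differ by a common translation. -/
theorem softmax_identifiable_up_to_translation (d k : ℕ) (hk : 0 < k)
    (β β' : Fin k → (Fin d → ℝ)) (β₀ β₀' : Fin k → ℝ)
    (h : ∀ x : Fin d → ℝ, ∀ i : Fin k,
      Real.exp ((∑ j, β i j * x j) + β₀ i) /
        (∑ l, Real.exp ((∑ j, β l j * x j) + β₀ l)) =
      Real.exp ((∑ j, β' i j * x j) + β₀' i) /
        (∑ l, Real.exp ((∑ j, β' l j * x j) + β₀' l))) :
    ∃ (t₁ : ℝ) (t₂ : Fin d → ℝ), ∀ i : Fin k,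
      β₀ i = β₀' i + t₁ ∧ β i = fun j => β' i j + t₂ j := by
  set i₀ : Fin k := ⟨0, hk⟩ with hi₀
  have key : ∀ x : Fin d → ℝ, ∀ i : Fin k,
      ((∑ j, β i j * x j) + β₀ i) + ((∑ j, β' i₀ j * x j) + β₀' i₀)
      = ((∑ j, β i₀ j * x j) + β₀ i₀) + ((∑ j, β' i j * x j) + β₀' i) := by
    intro x i
    have hS : 0 < ∑ l, Real.exp ((∑ j, β l j * x j) + β₀ l) :=
      Finset.sum_pos (fun l _ => Real.exp_pos _) ⟨i₀, Finset.mem_univ _⟩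
    have hS' : 0 < ∑ l, Real.exp ((∑ j, β' l j * x j) + β₀' l) :=
      Finset.sum_pos (fun l _ => Real.exp_pos _) ⟨i₀, Finset.mem_univ _⟩
    have h1 := h x i
    have h2 := h x i₀
    rw [div_eq_div_iff hS.ne' hS'.ne'] at h1 h2
    have hprod : Real.exp ((∑ j, β i j * x j) + β₀ i)
          * Real.exp ((∑ j, β' i₀ j * x j) + β₀' i₀)
        = Real.exp ((∑ j, β i₀ j * x j) + β₀ i₀)
          * Real.exp ((∑ j, β' i j * x j) + β₀' i) := by
      have hSS : ((∑ l, Real.exp ((∑ j, β l j * x j) + β₀ l))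
          * (∑ l, Real.exp ((∑ j, β' l j * x j) + β₀' l))) ≠ 0 := by positivity
      apply mul_right_cancel₀ hSS
      linear_combination (Real.exp ((∑ j, β' i₀ j * x j) + β₀' i₀)
          * (∑ l, Real.exp ((∑ j, β l j * x j) + β₀ l))) * h1
        - (Real.exp ((∑ j, β' i j * x j) + β₀' i)
          * (∑ l, Real.exp ((∑ j, β l j * x j) + β₀ l))) * h2
    rw [← Real.exp_add, ← Real.exp_add] at hprod
    exact Real.exp_injective hprod
  have hconst : ∀ i : Fin k, β₀ i + β₀' i₀ = β₀ i₀ + β₀' i := by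
    intro i
    have := key 0 i
    simpa using this
  have hcoord : ∀ i : Fin k, ∀ m : Fin d,
      β i m + β' i₀ m = β i₀ m + β' i m := by
    intro i m
    have hk := key (Pi.single m (1:ℝ)) i
    have hsum : ∀ γ : Fin k → Fin d → ℝ, ∀ l : Fin k,
        (∑ j, γ l j * (Pi.single m (1:ℝ) : Fin d → ℝ) j) = γ l m := by
      intro γ l
      rw [Finset.sum_eq_single m]
      · simp
      · intro b _ hb; simp [Pi.single_apply, hb]
      · simp
    rw [hsum β i, hsum β' i₀, hsum β i₀, hsum β' i] at hk
    have hc := hconst i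
    linarith
  refine ⟨β₀ i₀ - β₀' i₀, fun j => β i₀ j - β' i₀ j, fun i => ⟨?_, ?_⟩⟩
  · have := hconst i; linarith
  · funext j; have := hcoord i j; simp; linarith
end

section
/- Let f(y|μ,σ) = (2πσ)^{-1/2} exp(-(y-μ)²/(2σ)) be the Gaussian density with mean μ and variance σ. If (μ₁,σ₁),...,(μ_k,σ_k) are pairwise distinct pairs with σⱼ > 0, then the functions y ↦ f(y|μⱼ,σⱼ), j = 1,...,k, are linearly independent over ℝ. -/
/-!
Order the pairs lexicographically by (variance, mean). As `y → ∞`, the quotient of two Gaussian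
densities is a constant times `exp` of a quadratic in `y` whose leading coefficient is negative
when the numerator has the smaller variance, and which is linear with negative slope when the
variances agree and the numerator has the smaller mean. So in a vanishing linear combination,
dividing by the density of the lexicographically largest pair with nonzero coefficient and
letting `y → ∞` shows that this coefficient is zero.
-/

open Real Finset Filter Topology

/-- The univariate Gaussian density with mean `μ` and variance `σ`. -/
noncomputable def gaussPDF (μ σ y : ℝ) : ℝ :=
  (Real.sqrt (2 * Real.pi * σ))⁻¹ * Real.exp (-(y - μ) ^ 2 / (2 * σ))

theorem linearIndependent_of_tendsto_div_zero {ι α κ 𝕜 : Type*} [Fintype ι] [LinearOrder κ]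
    [Field 𝕜] [TopologicalSpace 𝕜] [IsTopologicalRing 𝕜] [T2Space 𝕜]
    {l : Filter α} [l.NeBot] (f : ι → α → 𝕜) (r : ι → κ) (hr : Function.Injective r)
    (hne : ∀ i, ∀ᶠ y in l, f i y ≠ 0)
    (hdom : ∀ i j, r i < r j → Tendsto (fun y => f i y / f j y) l (𝓝 0)) :
    LinearIndependent 𝕜 f := by
  classical
  rw [Fintype.linearIndependent_iff]
  intro c hc
  by_contra! ⟨i₁, hi₁⟩
  obtain ⟨j, hj, hmax⟩ := (univ.filter (c · ≠ 0)).exists_max_image r ⟨i₁, by simpa using hi₁⟩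
  have hterm : ∀ i, Tendsto (fun y => c i * (f i y / f j y)) l (𝓝 (if i = j then c j else 0)) := by
    intro i
    by_cases hij : i = j
    · subst hij
      refine tendsto_const_nhds.congr' ((hne i).mono fun y hy => ?_)
      simp [div_self hy]
    by_cases hci : c i = 0
    · simp [hci, hij]
    have hlt : r i < r j := (hmax i (by simpa using hci)).lt_of_ne (hr.ne hij)
    simpa [hij] using (hdom i j hlt).const_mul (c i)
  have hsum := tendsto_finsetSum univ fun i _ => hterm i
  have hzero : ∀ y, ∑ i, c i * (f i y / f j y) = 0 := fun y => by
    simp_rw [← mul_div_assoc, ← sum_div]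
    have := congrFun hc y
    simp only [Finset.sum_apply, Pi.smul_apply, smul_eq_mul, Pi.zero_apply] at this
    rw [this, zero_div]
  simp only [hzero, sum_ite_eq', mem_univ, if_true] at hsum
  exact (mem_filter.1 hj).2 (tendsto_nhds_unique hsum tendsto_const_nhds)

theorem gaussPDF_pos (μ : ℝ) {σ : ℝ} (hσ : 0 < σ) (y : ℝ) : 0 < gaussPDF μ σ y := by
  unfold gaussPDF
  have : 0 < Real.sqrt (2 * π * σ) := Real.sqrt_pos.2 (by positivity)
  positivity

theorem tendsto_mul_mul_add_atBot {a b : ℝ} (h : a < 0 ∨ a = 0 ∧ b < 0) :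
    Tendsto (fun y => y * (a * y + b)) atTop atBot := by
  rcases h with ha | ⟨rfl, hb⟩
  · exact tendsto_id.atTop_mul_atBot₀
      (tendsto_atBot_add_const_right _ b (tendsto_id.const_mul_atTop_of_neg ha))
  · simpa [mul_comm] using tendsto_id.const_mul_atTop_of_neg hb

theorem gaussPDF_div_gaussPDF {σ₁ σ₀ : ℝ} (μ₁ μ₀ : ℝ) (h₁ : σ₁ ≠ 0) (h₀ : σ₀ ≠ 0) (y : ℝ) :
    gaussPDF μ₁ σ₁ y / gaussPDF μ₀ σ₀ y =
      √(2 * π * σ₀) / √(2 * π * σ₁) *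
        exp (y * ((1 / (2 * σ₀) - 1 / (2 * σ₁)) * y + (μ₁ / σ₁ - μ₀ / σ₀)) +
          (μ₀ ^ 2 / (2 * σ₀) - μ₁ ^ 2 / (2 * σ₁))) := by
  rw [gaussPDF, gaussPDF, mul_div_mul_comm, inv_div_inv, ← exp_sub]
  congr 2
  field_simp
  ring

theorem tendsto_gaussPDF_div_gaussPDF {μ₁ σ₁ μ₀ σ₀ : ℝ} (h₁ : 0 < σ₁) (h₀ : 0 < σ₀)
    (h : toLex (σ₁, μ₁) < toLex (σ₀, μ₀)) :
    Tendsto (fun y => gaussPDF μ₁ σ₁ y / gaussPDF μ₀ σ₀ y) atTop (𝓝 0) := by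
  have hcoeff : 1 / (2 * σ₀) - 1 / (2 * σ₁) < 0 ∨
      1 / (2 * σ₀) - 1 / (2 * σ₁) = 0 ∧ μ₁ / σ₁ - μ₀ / σ₀ < 0 := by
    rcases Prod.Lex.toLex_lt_toLex.1 h with hσ | ⟨hσ, hμ⟩
    · left
      have : 1 / (2 * σ₀) < 1 / (2 * σ₁) := one_div_lt_one_div_of_lt (by positivity) (by linarith)
      linarith
    · subst hσ
      right
      have : μ₁ / σ₁ < μ₀ / σ₁ := div_lt_div_of_pos_right hμ h₁
      constructor <;> linarith
  have hexp := tendsto_exp_atBot.comp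
    (tendsto_atBot_add_const_right _ (μ₀ ^ 2 / (2 * σ₀) - μ₁ ^ 2 / (2 * σ₁))
      (tendsto_mul_mul_add_atBot hcoeff))
  simpa [Function.comp_def, gaussPDF_div_gaussPDF μ₁ μ₀ h₁.ne' h₀.ne'] using
    hexp.const_mul (√(2 * π * σ₀) / √(2 * π * σ₁))

/-- Gaussian densities with pairwise distinct (mean, variance) pairs are
linearly independent over ℝ. -/
theorem gaussian_linear_independent (k : ℕ) (μ σ : Fin k → ℝ)
    (hσ : ∀ j, 0 < σ j) (hdist : Function.Injective (fun j => (μ j, σ j)))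
    (c : Fin k → ℝ)
    (h : ∀ y : ℝ, ∑ j, c j * gaussPDF (μ j) (σ j) y = 0) :
    ∀ j, c j = 0 := by
  have hind : LinearIndependent ℝ fun j y => gaussPDF (μ j) (σ j) y :=
    linearIndependent_of_tendsto_div_zero (l := atTop) _ (fun j => toLex (σ j, μ j))
      (fun i j hij => hdist (by simpa [and_comm] using hij))
      (fun j => .of_forall fun y => (gaussPDF_pos _ (hσ j) y).ne')
      (fun i j hij => tendsto_gaussPDF_div_gaussPDF (hσ i) (hσ j) hij)
  exact Fintype.linearIndependent_iff.1 hind c (funext fun y => by simpa using h y)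
end

section
/- Let u(X,Y) = exp(β₁ᵀX + β₀) · f(Y | aᵀX + b, σ) where f(y|μ,σ) is the Gaussian density with mean μ and variance σ > 0. Then the partial differential equation ∂u/∂β₁ · ∂u/∂b = ∂u/∂β₀ · ∂u/∂a holds for all (X,Y) ∈ ℝ^d × ℝ, where ∂u/∂β₁ and ∂u/∂a are gradients in ℝ^d and the equality is between vectors in ℝ^d. -/
open Real Finset

/-- The expert function `u(X,Y) = exp(β₁ᵀX + β₀) f(Y | aᵀX + b, σ)` as a function
of the parameters `(β₁, β₀, a, b)` for fixed data `(X, Y)` and variance `σ`. -/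
noncomputable def expertFn (d : ℕ) (X : Fin d → ℝ) (Y σ : ℝ)
    (β₁ : Fin d → ℝ) (β₀ : ℝ) (a : Fin d → ℝ) (b : ℝ) : ℝ :=
  Real.exp ((∑ j, β₁ j * X j) + β₀) * gaussPDF ((∑ j, a j * X j) + b) σ Y

/-!
`u` is a product `φ(β₁ᵀX + β₀) ψ(aᵀX + b)` of two ridge functions. Moving the `l`-th
coordinate of `β₁` (resp. `a`) changes the argument of `φ` (resp. `ψ`) at rate `X l`, so
`∂u/∂β₁ₗ = X l ∂u/∂β₀` and `∂u/∂aₗ = X l ∂u/∂b`; both sides of the PDE are then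
`X l ∂u/∂β₀ ∂u/∂b`.
-/

section RidgeProduct

variable {ι : Type*} [Fintype ι] [DecidableEq ι]

theorem hasDerivAt_sum_update_mul (v X : ι → ℝ) (i : ι) :
    HasDerivAt (fun s => ∑ j, Function.update v i s j * X j) (X i) (v i) := by
  have hcoord (j : ι) : HasDerivAt (fun s => Function.update v i s j * X j)
      ((Pi.single i (1 : ℝ) : ι → ℝ) j * X j) (v i) :=
    (hasDerivAt_pi.mp (hasDerivAt_update v i (v i)) j).mul_const (X j)
  have hsum : HasDerivAt (fun s => ∑ j, Function.update v i s j * X j)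
      (∑ j, (Pi.single i (1 : ℝ) : ι → ℝ) j * X j) (v i) :=
    HasDerivAt.fun_sum fun j _ => hcoord j
  simpa [Pi.single_apply] using hsum

theorem HasDerivAt.comp_sum_update_mul_add {f : ℝ → ℝ} {f' : ℝ} {v X : ι → ℝ} {c : ℝ}
    (hf : HasDerivAt f f' ((∑ j, v j * X j) + c)) (i : ι) :
    HasDerivAt (fun s => f ((∑ j, Function.update v i s j * X j) + c)) (f' * X i) (v i) :=
  hf.comp_of_eq (v i) ((hasDerivAt_sum_update_mul v X i).add_const c) (by simp)

def ridgeProduct (φ ψ : ℝ → ℝ) (X β₁ : ι → ℝ) (β₀ : ℝ) (a : ι → ℝ) (b : ℝ) : ℝ :=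
  φ ((∑ j, β₁ j * X j) + β₀) * ψ ((∑ j, a j * X j) + b)

variable {φ ψ : ℝ → ℝ} {X β₁ a : ι → ℝ} {β₀ b : ℝ}

theorem deriv_ridgeProduct_update_left (hφ : DifferentiableAt ℝ φ ((∑ j, β₁ j * X j) + β₀))
    (i : ι) :
    deriv (fun s => ridgeProduct φ ψ X (Function.update β₁ i s) β₀ a b) (β₁ i) =
      X i * deriv (fun s => ridgeProduct φ ψ X β₁ s a b) β₀ := by
  have hβ₁ : HasDerivAt (fun s => ridgeProduct φ ψ X (Function.update β₁ i s) β₀ a b) _ (β₁ i) :=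
    (hφ.hasDerivAt.comp_sum_update_mul_add i).mul_const _
  have hβ₀ : HasDerivAt (fun s => ridgeProduct φ ψ X β₁ s a b) _ β₀ :=
    (hφ.hasDerivAt.comp β₀ ((hasDerivAt_id β₀).const_add _)).mul_const _
  rw [hβ₁.deriv, hβ₀.deriv]
  ring

theorem deriv_ridgeProduct_update_right (hψ : DifferentiableAt ℝ ψ ((∑ j, a j * X j) + b))
    (i : ι) :
    deriv (fun s => ridgeProduct φ ψ X β₁ β₀ (Function.update a i s) b) (a i) =
      X i * deriv (fun s => ridgeProduct φ ψ X β₁ β₀ a s) b := by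
  have ha : HasDerivAt (fun s => ridgeProduct φ ψ X β₁ β₀ (Function.update a i s) b) _ (a i) :=
    (hψ.hasDerivAt.comp_sum_update_mul_add i).const_mul _
  have hb : HasDerivAt (fun s => ridgeProduct φ ψ X β₁ β₀ a s) _ b :=
    (hψ.hasDerivAt.comp b ((hasDerivAt_id b).const_add _)).const_mul _
  rw [ha.deriv, hb.deriv]
  ring

theorem ridgeProduct_pde (hφ : DifferentiableAt ℝ φ ((∑ j, β₁ j * X j) + β₀))
    (hψ : DifferentiableAt ℝ ψ ((∑ j, a j * X j) + b)) (i : ι) :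
    deriv (fun s => ridgeProduct φ ψ X (Function.update β₁ i s) β₀ a b) (β₁ i) *
      deriv (fun s => ridgeProduct φ ψ X β₁ β₀ a s) b =
    deriv (fun s => ridgeProduct φ ψ X β₁ s a b) β₀ *
      deriv (fun s => ridgeProduct φ ψ X β₁ β₀ (Function.update a i s) b) (a i) := by
  rw [deriv_ridgeProduct_update_left hφ, deriv_ridgeProduct_update_right hψ]
  ring

end RidgeProduct

theorem differentiable_gaussPDF_mean (σ y : ℝ) : Differentiable ℝ fun μ => gaussPDF μ σ y := by
  unfold gaussPDF
  fun_prop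

theorem expert_gating_pde_general (d : ℕ) (X : Fin d → ℝ) (Y σ : ℝ)
    (β₁ : Fin d → ℝ) (β₀ : ℝ) (a : Fin d → ℝ) (b : ℝ) (l : Fin d) :
    deriv (fun s => expertFn d X Y σ (Function.update β₁ l s) β₀ a b) (β₁ l) *
      deriv (fun s => expertFn d X Y σ β₁ β₀ a s) b =
    deriv (fun s => expertFn d X Y σ β₁ s a b) β₀ *
      deriv (fun s => expertFn d X Y σ β₁ β₀ (Function.update a l s) b) (a l) :=
  ridgeProduct_pde (φ := exp) (ψ := fun μ => gaussPDF μ σ Y) differentiableAt_exp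
    (differentiable_gaussPDF_mean σ Y _) l

/-- The PDE `∂u/∂β₁ ⬝ ∂u/∂b = ∂u/∂β₀ ⬝ ∂u/∂a` holds componentwise, where the
gradients in `β₁` and `a` are taken coordinate by coordinate. -/
theorem expert_gating_pde (d : ℕ) (X : Fin d → ℝ) (Y σ : ℝ) (hσ : 0 < σ)
    (β₁ : Fin d → ℝ) (β₀ : ℝ) (a : Fin d → ℝ) (b : ℝ) (l : Fin d) :
    deriv (fun s => expertFn d X Y σ (Function.update β₁ l s) β₀ a b) (β₁ l) *
      deriv (fun s => expertFn d X Y σ β₁ β₀ a s) b =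
    deriv (fun s => expertFn d X Y σ β₁ s a b) β₀ *
      deriv (fun s => expertFn d X Y σ β₁ β₀ (Function.update a l s) b) (a l) :=
  expert_gating_pde_general d X Y σ β₁ β₀ a b l
end

section
/- With d = 1 and m = 2, the assignment p₅ⱼ = 1, p₁ⱼ = p₂ⱼ = 0 for j = 1,2, p₃₁ = √3/3, p₃₂ = -√3/3, p₄₁ = p₄₂ = -1/6 is a non-trivial solution of the order-3 polynomial system: Σⱼ p₅ⱼ² p₁ⱼ = 0, Σⱼ p₅ⱼ² p₃ⱼ = 0, Σⱼ p₅ⱼ²(p₂ⱼ + p₁ⱼp₃ⱼ) = 0, Σⱼ p₅ⱼ² p₁ⱼ² = 0, Σⱼ p₅ⱼ²((1/2)p₃ⱼ² + p₄ⱼ) = 0, Σⱼ p₅ⱼ²((1/6)p₃ⱼ³ + p₃ⱼp₄ⱼ) = 0, Σⱼ p₅ⱼ² p₁ⱼ³ = 0, Σⱼ p₅ⱼ²((1/2)p₁ⱼ²p₃ⱼ + p₁ⱼp₂ⱼ) = 0, Σⱼ p₅ⱼ²((1/2)p₁ⱼp₃ⱼ² + p₁ⱼp₄ⱼ + p₂ⱼp₃ⱼ)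 = 0. -/
/-- With `d = 1` and `m = 2`, the assignment `p₅ⱼ = 1`, `p₁ⱼ = p₂ⱼ = 0`,
`p₃₁ = √3/3`, `p₃₂ = -√3/3`, `p₄₁ = p₄₂ = -1/6` is a non-trivial solution of
the order-3 polynomial system, showing `r̄(2) > 3`. -/
theorem order_three_system_nontrivial_solution :
    ∃ p₁ p₂ p₃ p₄ p₅ : Fin 2 → ℝ,
      p₁ = ![0, 0] ∧ p₂ = ![0, 0] ∧
      p₃ = ![Real.sqrt 3 / 3, -(Real.sqrt 3 / 3)] ∧
      p₄ = ![-(1 / 6), -(1 / 6)] ∧ p₅ = ![1, 1] ∧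
      (∑ j, p₅ j ^ 2 * p₁ j = 0) ∧
      (∑ j, p₅ j ^ 2 * p₃ j = 0) ∧
      (∑ j, p₅ j ^ 2 * (p₂ j + p₁ j * p₃ j) = 0) ∧
      (∑ j, p₅ j ^ 2 * p₁ j ^ 2 = 0) ∧
      (∑ j, p₅ j ^ 2 * ((1 / 2) * p₃ j ^ 2 + p₄ j) = 0) ∧
      (∑ j, p₅ j ^ 2 * ((1 / 6) * p₃ j ^ 3 + p₃ j * p₄ j) = 0) ∧
      (∑ j, p₅ j ^ 2 * p₁ j ^ 3 = 0) ∧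
      (∑ j, p₅ j ^ 2 * ((1 / 2) * p₁ j ^ 2 * p₃ j + p₁ j * p₂ j) = 0) ∧
      (∑ j, p₅ j ^ 2 * ((1 / 2) * p₁ j * p₃ j ^ 2 + p₁ j * p₄ j + p₂ j * p₃ j) = 0) ∧
      (∀ j, p₅ j ≠ 0) ∧ (∃ j, p₃ j ≠ 0) := by
  -- Only the equation `Σ (p₃²/2 + p₄) = 0` is not killed by `p₁ = p₂ = 0` or by the
  -- antisymmetry of `p₃` (with `p₄` constant); it holds because `(√3/3)² = 1/3`.
  have hsq : (Real.sqrt 3 / 3) ^ 2 = 1 / 3 := by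
    rw [div_pow, Real.sq_sqrt (by norm_num : (0 : ℝ) ≤ 3)]
    norm_num
  have hne : Real.sqrt 3 / 3 ≠ 0 := by positivity
  refine ⟨_, _, _, _, _, rfl, rfl, rfl, rfl, rfl, ?_⟩
  simp only [Fin.sum_univ_two, Fin.forall_fin_two, Fin.exists_fin_two,
    Matrix.cons_val_zero, Matrix.cons_val_one]
  refine ⟨by ring, by ring, by ring, by ring, ?_, by ring, by ring, by ring, by ring,
    by norm_num, Or.inl hne⟩
  rw [neg_sq, hsq]
  norm_num
end

section
/- For every tuple of reals (p₃₁, p₃₂, p₄₁, p₄₂, c₁, c₂) with c₁, c₂ > 0 satisfying, for every 1 ≤ ℓ ≤ 4, the equation Σⱼ₌₁² Σ_{α₃+2α₄=ℓ} cⱼ p₃ⱼ^{α₃} p₄ⱼ^{α₄}/(α₃! α₄!) = 0, one has p₃₁ = p₃₂ = p₄₁ = p₄₂ = 0. -/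
open Finset

private lemma aux_core_m2r4 (a b x y u v : ℝ) (hu : 0 < u) (hv : 0 < v)
  (e1 : u*a + v*b = 0)
  (e2 : u*(a^2+2*x) + v*(b^2+2*y) = 0)
  (e3 : u*(a^3+6*a*x) + v*(b^3+6*b*y) = 0)
  (e4 : u*(a^4+12*a^2*x+12*x^2) + v*(b^4+12*b^2*y+12*y^2) = 0) :
  a = 0 ∧ b = 0 ∧ x = 0 ∧ y = 0 := by
  have hu' := hu.ne'
  have hv' := hv.ne'
  have hab : a = 0 ∧ b = 0 := by
    rcases eq_or_ne a 0 with h0 | h0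
    · refine ⟨h0, ?_⟩
      have : v * b = 0 := by rw [h0] at e1; linarith
      exact (mul_eq_zero.1 this).resolve_left hv'
    · exfalso
      have hb : b ≠ 0 := by
        intro hb0
        apply h0
        have : u * a = 0 := by rw [hb0] at e1; linarith
        exact (mul_eq_zero.1 this).resolve_left hu'
      have hb2 : 0 < b * b := mul_self_pos.2 hb
      have habneg : a * b < 0 := by
        have h1 : u * (a * b) = -(v * (b * b)) := by linear_combination b*e1
        nlinarith [mul_pos hv hb2]
      have hne : b - a ≠ 0 := by intro hba; nlinarith [sq_nonneg a]
      have hii : a^2+6*x-b^2-6*y = 0 := by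
        have hii0 : u*a*(a^2+6*x-b^2-6*y) = 0 := by
          linear_combination e3 - (b^2+6*y)*e1
        exact (mul_eq_zero.1 hii0).resolve_left (mul_ne_zero hu' h0)
      have hi : a^2*b + 2*x*b - a*b^2 - 2*a*y = 0 := by
        have h0' : u*(a^2*b + 2*x*b - a*b^2 - 2*a*y) = 0 := by
          linear_combination b*e2 - (b^2+2*y)*e1
        exact (mul_eq_zero.1 h0').resolve_left hu'
      have hx : x = a*(2*b-a)/6 := by
        have hf : (b-a)*(6*x - a*(2*b-a)) = 0 := by linear_combination 3*hi - a*hii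
        have := (mul_eq_zero.1 hf).resolve_left hne
        linarith
      have hy : y = b*(2*a-b)/6 := by
        have hf : (b-a)*(6*y - b*(2*a-b)) = 0 := by linear_combination 3*hi - b*hii
        have := (mul_eq_zero.1 hf).resolve_left hne
        linarith
      have hE4 : u*(b*(a^4+12*a^2*x+12*x^2) - a*(b^4+12*b^2*y+12*y^2)) = 0 := by
        linear_combination b*e4 - (b^4+12*b^2*y+12*y^2)*e1
      rw [hx, hy] at hE4
      have key : u * (2*a*b*(a-b)*(a^2 - a*b + b^2)) = 0 := by
        linear_combination (-3)*hE4
      have hpos : (0:ℝ) < a^2 - a*b + b^2 := by nlinarith [sq_nonneg (a-b)]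
      have hfac : 2*a*b*(a-b)*(a^2 - a*b + b^2) ≠ 0 := by
        have hab' : a - b ≠ 0 := fun hz => hne (by linarith)
        exact mul_ne_zero (mul_ne_zero (mul_ne_zero (mul_ne_zero two_ne_zero h0) hb) hab') hpos.ne'
      exact hfac ((mul_eq_zero.1 key).resolve_left hu')
  obtain ⟨ha0, hb0⟩ := hab
  refine ⟨ha0, hb0, ?_⟩
  rw [ha0, hb0] at e2 e4
  norm_num at e2 e4
  have hx2 : x ^ 2 ≤ 0 := by nlinarith [mul_nonneg hv.le (sq_nonneg y)]
  have hy2 : y ^ 2 ≤ 0 := by nlinarith [mul_nonneg hu.le (sq_nonneg x)]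
  constructor
  · exact pow_eq_zero_iff (two_ne_zero).elim |>.1 (le_antisymm hx2 (sq_nonneg x))
  · exact pow_eq_zero_iff (two_ne_zero).elim |>.1 (le_antisymm hy2 (sq_nonneg y))

/-- The location-scale Gaussian mixture polynomial system with m = 2 components and
order r = 4 has no non-trivial solution: if c₁, c₂ > 0 and for every 1 ≤ ℓ ≤ 4 we
have Σⱼ Σ_{α₃+2α₄=ℓ} cⱼ p₃ⱼ^{α₃} p₄ⱼ^{α₄} / (α₃! α₄!), then all p₃ⱼ, p₄ⱼ
vanish. (The inner sum is parameterized by α₄, with α₃ = ℓ - 2α₄.) -/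
theorem no_nontrivial_solution_m_two_r_four
    (p₃ p₄ c : Fin 2 → ℝ) (hc : ∀ j, 0 < c j)
    (h : ∀ ℓ : ℕ, 1 ≤ ℓ → ℓ ≤ 4 →
      ∑ j, ∑ α₄ ∈ Finset.range (ℓ / 2 + 1),
        c j * p₃ j ^ (ℓ - 2 * α₄) * p₄ j ^ α₄ /
          ((Nat.factorial (ℓ - 2 * α₄) : ℝ) * (Nat.factorial α₄ : ℝ)) = 0) :
    ∀ j, p₃ j = 0 ∧ p₄ j = 0 := by
  have h1 := h 1 (by norm_num) (by norm_num)
  have h2 := h 2 (by norm_num) (by norm_num)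
  have h3 := h 3 (by norm_num) (by norm_num)
  have h4 := h 4 (by norm_num) (by norm_num)
  simp [Fin.sum_univ_two, Finset.sum_range_succ, Nat.factorial] at h1 h2 h3 h4
  obtain ⟨ha, hb, hx, hy⟩ := aux_core_m2r4 (p₃ 0) (p₃ 1) (p₄ 0) (p₄ 1) (c 0) (c 1)
    (hc 0) (hc 1)
    (by linear_combination h1) (by linear_combination 2*h2)
    (by linear_combination 6*h3) (by linear_combination 24*h4)
  intro j
  fin_cases j
  · exact ⟨ha, hx⟩
  · exact ⟨hb, hy⟩
end

section
/- Let f(y|μ,σ) be the Gaussian density and fix (a₁*,b₁*,σ₁*),...,(a_{k*}*,b_{k*}*,σ_{k*}*) pairwise distinct with σⱼ* > 0, and distinct gating vectors β₁₁*,...,β₁_{k*}* ∈ ℝ^d. Define g*(y|x) = Σⱼ softmaxⱼ(x) f(y|(aⱼ*)ᵀx + bⱼ*, σⱼ*) where softmaxⱼ(x) = exp((β₁ⱼ*)ᵀx + β₀ⱼ*)/Σₗ exp((β₁ₗ*)ᵀx + β₀ₗ*). Then for almost every x, the set of functions of y given by {∂^{ℓ₂}f/∂μ^{ℓ₂}(y|(aⱼ*)ᵀx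 + bⱼ*, σⱼ*) : 0 ≤ ℓ₂ ≤ 2} ∪ {g*(y|x)} for each fixed j is linearly independent, provided the softmax weights are not degenerate (g* is a strict mixture of at least two distinct Gaussian components). -/
/-!
For almost every `x` the pairs `(aⱼᵀx + bⱼ, σⱼ)` are pairwise distinct, since two of them
can only agree on a proper affine hyperplane. Each mean derivative of a Gaussian density is
`Hₗ(y - μ) · f(y|μ,σ)` for a polynomial `Hₗ` of degree `l`, and `f(y|μ,σ)` is a constant
times `exp(-y²/(2σ) + (μ/σ) y)`. A vanishing combination is therefore a vanishing sum
`∑ pᵢ(y) exp(αᵢ y² + βᵢ y)` with pairwise distinct `(αᵢ, βᵢ)`. The term whose `(αᵢ, βᵢ)`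
is lexicographically largest dominates all others as `y → ∞`, so its polynomial tends to `0`
and vanishes; induction on the number of terms kills every `pᵢ`. The coefficient of a
component other than `j` is `ω` times a positive softmax weight, so `ω = 0`, and then the `cₗ`
vanish because the `Hₗ` are linearly independent.
-/

open Real Finset MeasureTheory

/-- The softmax gating Gaussian mixture of experts conditional density. -/
noncomputable def softmaxGaussMix (d k : ℕ) (β₀ : Fin k → ℝ)
    (β₁ a : Fin k → (Fin d → ℝ)) (b σ : Fin k → ℝ)
    (x : Fin d → ℝ) (y : ℝ) : ℝ :=
  ∑ j, (Real.exp ((∑ i, β₁ j i * x i) + β₀ j) /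
      ∑ l, Real.exp ((∑ i, β₁ l i * x i) + β₀ l)) *
    gaussPDF ((∑ i, a j i * x i) + b j) (σ j) y

open Filter Topology Asymptotics Polynomial

theorem Polynomial.isLittleO_exp_mul_atTop (p : ℝ[X]) {t : ℝ} (ht : 0 < t) :
    (fun y => p.eval y) =o[atTop] fun y => exp (t * y) := by
  have hdeg : p.degree ≤ (X ^ p.natDegree : ℝ[X]).degree := by
    rw [degree_X_pow]
    exact degree_le_natDegree
  refine (isBigO_atTop_of_degree_le _ _ hdeg).trans_isLittleO ?_
  simpa only [eval_pow, eval_X] using isLittleO_pow_exp_pos_mul_atTop p.natDegree ht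

theorem Polynomial.eq_zero_of_tendsto_eval_atTop_nhds_zero {p : ℝ[X]}
    (h : Tendsto (fun y => p.eval y) atTop (𝓝 0)) : p = 0 :=
  leadingCoeff_eq_zero.1 ((Polynomial.tendsto_nhds_iff p).1 h).1

theorem exists_pos_tendsto_quadratic_sub_atTop {a b a' b' : ℝ}
    (h : toLex (a', b') < toLex (a, b)) :
    ∃ t > 0, Tendsto (fun y => a * y ^ 2 + b * y - (t * y + (a' * y ^ 2 + b' * y)))
      atTop atTop := by
  rcases Prod.Lex.toLex_lt_toLex.1 h with ha | ⟨rfl, hb⟩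
  · refine ⟨1, one_pos, ?_⟩
    have hlin : Tendsto (fun y => (a - a') * y + (b - b' - 1)) atTop atTop :=
      tendsto_atTop_add_const_right _ _ (tendsto_id.const_mul_atTop (sub_pos.2 ha))
    exact (tendsto_id.atTop_mul_atTop₀ hlin).congr fun y => by simp only [id]; ring
  · refine ⟨(b - b') / 2, by linarith, ?_⟩
    exact (tendsto_id.const_mul_atTop (by linarith : 0 < (b - b') / 2)).congr
      fun y => by simp only [id]; ring

theorem isLittleO_eval_mul_exp_quadratic {a b a' b' : ℝ} (h : toLex (a', b') < toLex (a, b))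
    (p : ℝ[X]) :
    (fun y => p.eval y * exp (a' * y ^ 2 + b' * y)) =o[atTop]
      fun y => exp (a * y ^ 2 + b * y) := by
  obtain ⟨t, ht, hgap⟩ := exists_pos_tendsto_quadratic_sub_atTop h
  calc (fun y => p.eval y * exp (a' * y ^ 2 + b' * y))
      =o[atTop] fun y => exp (t * y) * exp (a' * y ^ 2 + b' * y) :=
        (p.isLittleO_exp_mul_atTop ht).mul_isBigO (isBigO_refl _ _)
    _ = fun y => exp (t * y + (a' * y ^ 2 + b' * y)) := by simp only [exp_add]
    _ =o[atTop] fun y => exp (a * y ^ 2 + b * y) := isLittleO_exp_comp_exp_comp.2 hgap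

theorem eq_zero_of_forall_sum_eval_mul_exp_quadratic_eq_zero {ι : Type*} {a b : ι → ℝ}
    (s : Finset ι) (hab : Set.InjOn (fun i => (a i, b i)) s) (p : ι → ℝ[X])
    (h : ∀ y, ∑ i ∈ s, (p i).eval y * exp (a i * y ^ 2 + b i * y) = 0) :
    ∀ i ∈ s, p i = 0 := by
  classical
  induction s using Finset.induction_on_max_value (fun i => toLex (a i, b i)) with
  | empty => simp
  | insert i s hi hmax ih =>
    have hlt : ∀ j ∈ s, toLex (a j, b j) < toLex (a i, b i) := fun j hj =>
      (hmax j hj).lt_of_ne fun hji => hi <| by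
        rwa [← hab (mem_insert_of_mem hj) (mem_insert_self i s) (toLex.injective hji)]
    have hsum : ∀ y, (p i).eval y * exp (a i * y ^ 2 + b i * y)
        = -∑ j ∈ s, (p j).eval y * exp (a j * y ^ 2 + b j * y) := fun y => by
      rw [eq_neg_iff_add_eq_zero, ← h y, Finset.sum_insert hi]
    have hpi : p i = 0 := by
      have hdom := (IsLittleO.fun_sum fun j hj => isLittleO_eval_mul_exp_quadratic
        (hlt j hj) (p j)).neg_left.congr_left fun y => (hsum y).symm
      refine eq_zero_of_tendsto_eval_atTop_nhds_zero (hdom.tendsto_div_nhds_zero.congr ?_)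
      exact fun y => mul_div_cancel_right₀ _ (exp_pos _).ne'
    have hrest := ih (hab.mono (Finset.coe_subset.2 (Finset.subset_insert i s))) fun y => by
      simpa [hpi] using hsum y
    intro j hj
    rcases Finset.mem_insert.1 hj with rfl | hj
    exacts [hpi, hrest j hj]

theorem gaussPDF_eq_mul_exp_quadratic (μ σ y : ℝ) :
    gaussPDF μ σ y = (√(2 * π * σ))⁻¹ * exp (-μ ^ 2 / (2 * σ)) *
      exp (-(2 * σ)⁻¹ * y ^ 2 + μ / σ * y) := by
  rw [gaussPDF, mul_assoc (√(2 * π * σ))⁻¹, ← exp_add]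
  congr 2
  ring

theorem eq_zero_of_forall_sum_eval_mul_gaussPDF_eq_zero {ι : Type*} [Fintype ι]
    {μ σ : ι → ℝ} (hσ : ∀ i, 0 < σ i) (hinj : Function.Injective fun i => (μ i, σ i)) (p : ι → ℝ[X])
    (h : ∀ y, ∑ i, (p i).eval y * gaussPDF (μ i) (σ i) y = 0) (i : ι) : p i = 0 := by
  set κ : ι → ℝ := fun i => (√(2 * π * σ i))⁻¹ * exp (-μ i ^ 2 / (2 * σ i))
  have hκ : κ i ≠ 0 := by have := hσ i; positivity
  have hexp_inj : Set.InjOn (fun i => (-(2 * σ i)⁻¹, μ i / σ i)) (Finset.univ : Finset ι) := by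
    intro i _ j _ hij
    simp only [Prod.mk.injEq, neg_inj, inv_inj] at hij
    obtain ⟨hσij, hμij⟩ := hij
    replace hσij := mul_left_cancel₀ two_ne_zero hσij
    rw [hσij, div_left_inj' (hσ j).ne'] at hμij
    exact hinj (Prod.ext hμij hσij)
  have hκp := eq_zero_of_forall_sum_eval_mul_exp_quadratic_eq_zero _ hexp_inj
    (fun i => C (κ i) * p i) (fun y => (Finset.sum_congr rfl fun i _ => by
      rw [gaussPDF_eq_mul_exp_quadratic, eval_mul, eval_C]; ring).trans (h y)) i (mem_univ i)
  simpa [hκ] using hκp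

theorem hasDerivAt_gaussPDF_mean (σ y μ : ℝ) :
    HasDerivAt (fun m => gaussPDF m σ y) ((y - μ) / σ * gaussPDF μ σ y) μ := by
  have hexp : HasDerivAt (fun m => -(y - m) ^ 2 / (2 * σ)) ((y - μ) / σ) μ := by
    refine ((((hasDerivAt_id' μ).const_sub y).fun_pow 2).fun_neg.div_const
      (2 * σ)).congr_deriv ?_
    ring
  refine (hexp.exp.const_mul (√(2 * π * σ))⁻¹).congr_deriv ?_
  rw [gaussPDF]
  ring

theorem deriv_gaussPDF_mean (σ y : ℝ) :
    deriv (fun m => gaussPDF m σ y) = fun μ => (y - μ) / σ * gaussPDF μ σ y :=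
  funext fun μ => (hasDerivAt_gaussPDF_mean σ y μ).deriv

-- `Hₗ(z) = σ^(-l/2) Heₗ(z/√σ)`, with `Heₗ` the probabilists' Hermite polynomials.
noncomputable def gaussMeanDerivPoly (σ : ℝ) : Fin 3 → ℝ[X] :=
  ![1, C σ⁻¹ * X, C (σ⁻¹ ^ 2) * X ^ 2 - C σ⁻¹]

theorem iteratedDeriv_gaussPDF_mean (σ y μ : ℝ) (l : Fin 3) :
    iteratedDeriv l (fun m => gaussPDF m σ y) μ
      = (gaussMeanDerivPoly σ l).eval (y - μ) * gaussPDF μ σ y := by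
  fin_cases l
  · simp [gaussMeanDerivPoly]
  · simp [deriv_gaussPDF_mean, gaussMeanDerivPoly, div_eq_inv_mul]
  · have hderiv := (((hasDerivAt_id' μ).const_sub y).div_const σ).fun_mul
      (hasDerivAt_gaussPDF_mean σ y μ)
    simp only [iteratedDeriv_succ, iteratedDeriv_zero, deriv_gaussPDF_mean, hderiv.deriv]
    simp only [gaussMeanDerivPoly, Fin.reduceFinMk, Matrix.cons_val, eval_sub, eval_mul, eval_C,
      eval_pow, eval_X]
    ring

theorem sum_mul_iteratedDeriv_gaussPDF_mean (σ y μ : ℝ) (c : Fin 3 → ℝ) :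
    ∑ l : Fin 3, c l * iteratedDeriv l (fun m => gaussPDF m σ y) μ
      = (∑ l, c l • gaussMeanDerivPoly σ l).eval (y - μ) * gaussPDF μ σ y := by
  simp [iteratedDeriv_gaussPDF_mean, eval_finsetSum, Finset.sum_mul, mul_assoc]

theorem linearIndependent_gaussMeanDerivPoly {σ : ℝ} (hσ : σ ≠ 0) :
    LinearIndependent ℝ (gaussMeanDerivPoly σ) := by
  rw [Fintype.linearIndependent_iff]
  intro c hc
  have hcoeff (n : ℕ) := congrArg (coeff · n) hc
  have h2 : c 2 = 0 := by
    simpa [Fin.sum_univ_three, gaussMeanDerivPoly, coeff_X, coeff_one, hσ] using hcoeff 2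
  have h1 : c 1 = 0 := by
    simpa [Fin.sum_univ_three, gaussMeanDerivPoly, coeff_X, coeff_one, hσ] using hcoeff 1
  have h0 : c 0 = 0 := by
    simpa [Fin.sum_univ_three, gaussMeanDerivPoly, coeff_X, coeff_one, h2] using hcoeff 0
  intro l
  fin_cases l <;> assumption

theorem MeasureTheory.Measure.addHaar_setOf_apply_eq {E : Type*} [NormedAddCommGroup E]
    [NormedSpace ℝ E] [MeasurableSpace E] [BorelSpace E] [FiniteDimensional ℝ E] (μ : Measure E)
    [μ.IsAddHaarMeasure] {L : E →ₗ[ℝ] ℝ} (hL : L ≠ 0) (c : ℝ) : μ {x | L x = c} = 0 := by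
  obtain ⟨v, hv⟩ : ∃ v, L v ≠ 0 := by
    by_contra! h
    exact hL (LinearMap.ext h)
  have hset : {x | L x = c} = (· + -((c / L v) • v)) ⁻¹' (LinearMap.ker L) := by
    ext x
    simp [div_mul_cancel₀ _ hv, add_neg_eq_zero]
  rw [hset, measure_preimage_add_right]
  exact addHaar_submodule μ _ (by rwa [Ne, LinearMap.ker_eq_top])

theorem ae_dotProduct_add_ne {ι : Type*} [Fintype ι] {v v' : ι → ℝ} {c c' : ℝ}
    (h : (v, c) ≠ (v', c')) : ∀ᵐ x : ι → ℝ, v ⬝ᵥ x + c ≠ v' ⬝ᵥ x + c' := by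
  by_cases hv : v = v'
  · subst hv
    have hc : c ≠ c' := fun hc => h (by rw [hc])
    exact Eventually.of_forall fun x => by simpa using hc
  · have hL : dotProductBilin ℝ ℝ (v - v') ≠ 0 := fun hL => hv <| sub_eq_zero.1 <|
      dotProduct_self_eq_zero.1 (LinearMap.congr_fun hL (v - v'))
    refine ae_iff.2 (measure_mono_null (fun x hx => ?_)
      (Measure.addHaar_setOf_apply_eq volume hL (c' - c)))
    simp only [ne_eq, Set.mem_ofPred_eq, not_not] at hx
    simp only [Set.mem_ofPred_eq, dotProductBilin_apply_apply, sub_dotProduct]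
    linarith

theorem ae_injective_dotProduct_add {ι κ β : Type*} [Fintype ι] [Countable κ]
    {a : κ → ι → ℝ} {b : κ → ℝ} {σ : κ → β} (h : Function.Injective fun j => (a j, b j, σ j)) :
    ∀ᵐ x : ι → ℝ, Function.Injective fun j => (a j ⬝ᵥ x + b j, σ j) := by
  simp only [Function.Injective, ae_all_iff]
  intro j j'
  by_cases hjj : j = j'
  · exact Eventually.of_forall fun _ _ => hjj
  by_cases hσ : σ j = σ j'
  · have hab : (a j, b j) ≠ (a j', b j') := fun hab => hjj (h (by simp_all))
    filter_upwards [ae_dotProduct_add_ne hab] with x hx heq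
    exact absurd (congrArg Prod.fst heq) hx
  · exact Eventually.of_forall fun _ heq => absurd (congrArg Prod.snd heq) hσ

theorem gaussian_derivatives_and_mixture_linear_independent_general (d k : ℕ) (hk : 2 ≤ k)
    (β₀s : Fin k → ℝ) (β₁s as : Fin k → (Fin d → ℝ)) (bs σs : Fin k → ℝ)
    (hσ : ∀ j, 0 < σs j)
    (hdist : Function.Injective (fun j => (as j, bs j, σs j))) :
    ∀ᵐ x : Fin d → ℝ, ∀ j : Fin k, ∀ (c : Fin 3 → ℝ) (ω : ℝ),
      (∀ y : ℝ,
        (∑ l : Fin 3, c l *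
          iteratedDeriv l (fun m => gaussPDF m (σs j) y) ((∑ i, as j i * x i) + bs j))
          + ω * softmaxGaussMix d k β₀s β₁s as bs σs x y = 0) →
      (∀ l, c l = 0) ∧ ω = 0 := by
  have : Nontrivial (Fin k) := Fin.nontrivial_iff_two_le.2 hk
  filter_upwards [ae_injective_dotProduct_add hdist] with x hx j c ω H
  set μ : Fin k → ℝ := fun l => as l ⬝ᵥ x + bs l
  set w : Fin k → ℝ := fun l => exp ((∑ i, β₁s l i * x i) + β₀s l) /
    ∑ l', exp ((∑ i, β₁s l' i * x i) + β₀s l')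
  set Q := ∑ l, c l • gaussMeanDerivPoly (σs j) l
  have hp := eq_zero_of_forall_sum_eval_mul_gaussPDF_eq_zero hσ hx
    (fun l => C (ω * w l) + if l = j then taylor (-μ j) Q else 0) fun y => by
      rw [← H y, sum_mul_iteratedDeriv_gaussPDF_mean]
      simp only [eval_add, eval_C, apply_ite (Polynomial.eval y), eval_zero, taylor_eval,
        add_mul, Finset.sum_add_distrib, ite_mul, zero_mul, Finset.sum_ite_eq', Finset.mem_univ,
        if_true, softmaxGaussMix, Finset.mul_sum, mul_assoc, ← sub_eq_add_neg]
      exact add_comm _ _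
  obtain ⟨l, hl⟩ := exists_ne j
  have hω : ω = 0 := by
    have hw : w l ≠ 0 := by positivity
    simpa [hl, hw] using hp l
  refine ⟨Fintype.linearIndependent_iff.1
    (linearIndependent_gaussMeanDerivPoly (hσ j).ne') c ?_, hω⟩
  simpa [hω] using hp j

/-- For almost every `x`, the mean-derivatives of the Gaussian density up to order 2
at the `j`-th component together with the mixture density `g*(·|x)` form a linearly
independent family of functions of `y`, provided the mixture has at least two
distinct components. -/
theorem gaussian_derivatives_and_mixture_linear_independent (d k : ℕ) (hk : 2 ≤ k)
    (β₀s : Fin k → ℝ) (β₁s as : Fin k → (Fin d → ℝ)) (bs σs : Fin k → ℝ)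
    (hσ : ∀ j, 0 < σs j)
    (hdist : Function.Injective (fun j => (as j, bs j, σs j)))
    (hβ : Function.Injective β₁s) :
    ∀ᵐ x : Fin d → ℝ, ∀ j : Fin k, ∀ (c : Fin 3 → ℝ) (ω : ℝ),
      (∀ y : ℝ,
        (∑ l : Fin 3, c l *
          iteratedDeriv l (fun m => gaussPDF m (σs j) y) ((∑ i, as j i * x i) + bs j))
          + ω * softmaxGaussMix d k β₀s β₁s as bs σs x y = 0) →
      (∀ l, c l = 0) ∧ ω = 0 :=
  gaussian_derivatives_and_mixture_linear_independent_general d k hk β₀s β₁s as bs σs hσ hdist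
end
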